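/- arXiv:2112.14737 — 11 statements merged into one kernel-verified Lean document; each statement's English description precedes it below -/
import Mathlib

section
/- Let F be a finite field with exactly q elements, let P, Q ∈ F[X] be nonzero coprime polynomials with natDegree P = m and natDegree Q = m, and let D be a natural number with m ≤ D. Then for every polynomial T ∈ F[X] with natDegree T ≤ D + m, the number of pairs (R₁, R₂) of polynomials with natDegree R₁ ≤ D, natDegree R₂ ≤ D and R₁·P + R₂·Q = T is exactly q^(D − m + 1). Equivalently, when R₁ and R₂ are chosen independently and uniformly at random among polynomials of degree at most D, the polynomial R₁·P + R₂·Q is uniformly distributed over the polynomials of degree at most D + m. -/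
/-!
Write `T = A P + B Q` with `deg A < deg Q`, reducing a Bézout solution modulo `Q`. By coprimality
every solution of `R₁ P + R₂ Q = T` is `(A + S Q, B - S P)` for a unique `S`, and
`deg R₁ ≤ D` exactly when `deg S ≤ D - m`; the bound `deg R₂ ≤ D` is then automatic,
because `R₂ Q = T - R₁ P` has degree at most `D + m`. So the solutions are in bijection with the
`q ^ (D - m + 1)` polynomials of degree at most `D - m`.
-/

open Polynomial

namespace Polynomial

theorem card_natDegree_le (R : Type*) [Semiring R] [Fintype R] (n : ℕ) :
    Nat.card {p : R[X] // p.natDegree ≤ n} = Fintype.card R ^ (n + 1) :=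
  calc Nat.card {p : R[X] // p.natDegree ≤ n}
      = Nat.card (degreeLT R (n + 1)) := Nat.card_congr <| Equiv.subtypeEquivRight fun p => by
        rw [degreeLT_succ_eq_degreeLE, mem_degreeLE, natDegree_le_iff_degree_le]
    _ = Nat.card (Fin (n + 1) → R) := Nat.card_congr (degreeLTEquiv R (n + 1)).toEquiv
    _ = Fintype.card R ^ (n + 1) := by simp [Nat.card_eq_fintype_card]

section Domain

variable {R : Type*} [CommRing R] [IsDomain R] {P Q A B T : R[X]}

theorem natDegree_mul_le_iff_le_sub {S : R[X]} {n : ℕ} (hQ : Q ≠ 0) (hQn : Q.natDegree ≤ n) :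
    (S * Q).natDegree ≤ n ↔ S.natDegree ≤ n - Q.natDegree := by
  rcases eq_or_ne S 0 with rfl | hS
  · simp
  · rw [natDegree_mul hS hQ]
    omega

theorem natDegree_le_of_mul_add_mul_eq {n : ℕ} (hQ : Q ≠ 0) (h : A * P + B * Q = T)
    (hA : (A * P).natDegree ≤ n + Q.natDegree) (hT : T.natDegree ≤ n + Q.natDegree) :
    B.natDegree ≤ n := by
  rcases eq_or_ne B 0 with rfl | hB
  · simp
  · have hBQ : (B * Q).natDegree ≤ n + Q.natDegree := by
      rw [eq_sub_of_add_eq' h]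
      exact (natDegree_sub_le _ _).trans (max_le hT hA)
    rw [natDegree_mul hB hQ] at hBQ
    omega

theorem IsCoprime.mul_add_mul_eq_iff (hcop : IsCoprime P Q) (hQ : Q ≠ 0)
    (h : A * P + B * Q = T) {R₁ R₂ : R[X]} :
    R₁ * P + R₂ * Q = T ↔ ∃ S, A + S * Q = R₁ ∧ B - S * P = R₂ := by
  constructor
  · intro hR
    obtain ⟨S, hS⟩ : Q ∣ R₁ - A :=
      hcop.symm.dvd_of_dvd_mul_right ⟨B - R₂, by linear_combination hR - h⟩
    refine ⟨S, by linear_combination -hS, mul_right_cancel₀ hQ ?_⟩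
    linear_combination h - hR + P * hS
  · rintro ⟨S, rfl, rfl⟩
    linear_combination h

end Domain

section Field

variable {K : Type*} [Field K] {P Q : K[X]}

theorem IsCoprime.exists_mul_add_mul_eq_of_degree_lt (hcop : IsCoprime P Q) (hQ : Q ≠ 0)
    (T : K[X]) : ∃ A B : K[X], A * P + B * Q = T ∧ A.degree < Q.degree := by
  obtain ⟨U, V, hUV⟩ := hcop
  refine ⟨T * U % Q, T * U / Q * P + T * V, ?_, degree_mod_lt _ hQ⟩
  linear_combination P * EuclideanDomain.div_add_mod (T * U) Q + T * hUV

theorem IsCoprime.card_mul_add_mul_eq [Fintype K] (hcop : IsCoprime P Q) (hQ : Q ≠ 0)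
    {m D : ℕ} (hPm : P.natDegree ≤ m) (hQm : Q.natDegree = m) (hmD : m ≤ D) {T : K[X]}
    (hT : T.natDegree ≤ D + m) :
    Nat.card {R : K[X] × K[X] //
        R.1.natDegree ≤ D ∧ R.2.natDegree ≤ D ∧ R.1 * P + R.2 * Q = T}
      = Fintype.card K ^ (D - m + 1) := by
  subst hQm
  obtain ⟨A, B, hAB, hA⟩ := hcop.exists_mul_add_mul_eq_of_degree_lt hQ T
  have hAD : A.natDegree ≤ D := (natDegree_le_natDegree hA.le).trans hmD
  let f (S : K[X]) : K[X] × K[X] := (A + S * Q, B - S * P)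
  have hf : f.Injective := fun S₁ S₂ h =>
    mul_right_cancel₀ hQ (add_left_cancel (congrArg Prod.fst h))
  have hsol :
      {R : K[X] × K[X] | R.1.natDegree ≤ D ∧ R.2.natDegree ≤ D ∧ R.1 * P + R.2 * Q = T}
        = f '' {S | S.natDegree ≤ D - Q.natDegree} := by
    ext ⟨R₁, R₂⟩
    simp only [Set.mem_ofPred_eq, Set.mem_image, f, Prod.mk.injEq]
    constructor
    · rintro ⟨hR₁, -, hR⟩
      obtain ⟨S, rfl, rfl⟩ := (hcop.mul_add_mul_eq_iff hQ hAB).1 hR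
      refine ⟨S, (natDegree_mul_le_iff_le_sub hQ hmD).1 ?_, rfl, rfl⟩
      rw [show S * Q = A + S * Q - A by ring]
      exact (natDegree_sub_le _ _).trans (max_le hR₁ hAD)
    · rintro ⟨S, hS, rfl, rfl⟩
      have hR₁ : (A + S * Q).natDegree ≤ D :=
        (natDegree_add_le _ _).trans (max_le hAD ((natDegree_mul_le_iff_le_sub hQ hmD).2 hS))
      have hR := (hcop.mul_add_mul_eq_iff hQ hAB).2 ⟨S, rfl, rfl⟩
      refine ⟨hR₁, natDegree_le_of_mul_add_mul_eq hQ hR ?_ hT, hR⟩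
      exact natDegree_mul_le.trans (add_le_add hR₁ hPm)
  calc _ = Nat.card (f '' {S | S.natDegree ≤ D - Q.natDegree}) := Nat.card_congr (.setCongr hsol)
    _ = _ := Nat.card_image_of_injective hf _
    _ = _ := card_natDegree_le K _

end Field

end Polynomial

theorem stmt_0_general {F : Type*} [Field F] [Fintype F] (q : ℕ) (hq : Fintype.card F = q)
    (P Q : F[X]) (hQ : Q ≠ 0) (hcop : IsCoprime P Q)
    (m D : ℕ) (hPm : P.natDegree = m) (hQm : Q.natDegree = m) (hmD : m ≤ D) :
    ∀ T : F[X], T.natDegree ≤ D + m →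
      Nat.card {R : F[X] × F[X] //
        R.1.natDegree ≤ D ∧ R.2.natDegree ≤ D ∧ R.1 * P + R.2 * Q = T}
        = q ^ (D - m + 1) := by
  intro T hT
  rw [← hq]
  exact hcop.card_mul_add_mul_eq hQ hPm.le hQm hmD hT

/-- Kissner–Song uniformity lemma (counting form): for coprime `P, Q` of equal
degree `m` and any target `T` of degree at most `D + m`, there are exactly
`q ^ (D - m + 1)` pairs `(R₁, R₂)` of polynomials of degree at most `D` with
`R₁ * P + R₂ * Q = T`. -/
theorem stmt_0 {F : Type*} [Field F] [Fintype F] (q : ℕ) (hq : Fintype.card F = q)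
    (P Q : F[X]) (hP : P ≠ 0) (hQ : Q ≠ 0) (hcop : IsCoprime P Q)
    (m D : ℕ) (hPm : P.natDegree = m) (hQm : Q.natDegree = m) (hmD : m ≤ D) :
    ∀ T : F[X], T.natDegree ≤ D + m →
      Nat.card {R : F[X] × F[X] //
        R.1.natDegree ≤ D ∧ R.2.natDegree ≤ D ∧ R.1 * P + R.2 * Q = T}
        = q ^ (D - m + 1) :=
  stmt_0_general q hq P Q hQ hcop m D hPm hQm hmD
end

section
/- Let F be a finite field with exactly q elements, let n be a natural number, let x : Fin n → F be injective (n distinct evaluation points), and let D be a natural number with D + 1 ≤ n. Then the number of tuples y : Fin n → F for which there exists a polynomial Q ∈ F[X] with natDegree Q ≤ D satisfying Q.eval (x i) = y i for every i equals q^(D + 1). Consequently, if y is chosen uniformly at random from F^n, the probability that some polynomial of degree at most D interpolates all n points (x i, y i) is exactly 1/q^(n − D − 1). -/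
open Polynomial

/-! Evaluation at `n` distinct points is injective on polynomials of degree `≤ D < n`, since the
difference of two such polynomials with the same values has more roots than its degree. So the
interpolable tuples are in bijection with `degreeLT F (D + 1) ≃ (Fin (D + 1) → F)`. -/

namespace Polynomial

theorem natCard_degreeLT (R : Type*) [Semiring R] (n : ℕ) :
    Nat.card (degreeLT R n) = Nat.card R ^ n := by
  rw [Nat.card_congr (degreeLTEquiv R n).toEquiv, Nat.card_fun, Nat.card_fin]

theorem mem_degreeLT_succ_iff {R : Type*} [Semiring R] {D : ℕ} {Q : R[X]} :
    Q ∈ degreeLT R (D + 1) ↔ Q.natDegree ≤ D := by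
  rw [degreeLT_succ_eq_degreeLE, mem_degreeLE, natDegree_le_iff_degree_le]

theorem injective_eval_degreeLT {R ι : Type*} [CommRing R] [IsDomain R] [Fintype ι]
    {x : ι → R} (hx : Function.Injective x) {n : ℕ} (hn : n ≤ Fintype.card ι) :
    Function.Injective fun Q : degreeLT R n => fun i => Q.1.eval (x i) := by
  rintro ⟨P, hP⟩ ⟨Q, hQ⟩ hPQ
  rw [mem_degreeLT] at hP hQ
  exact Subtype.ext <| eq_of_degrees_lt_of_eval_index_eq Finset.univ hx.injOn
    (hP.trans_le (by simpa using hn)) (hQ.trans_le (by simpa using hn))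
    fun i _ => congrFun hPQ i

end Polynomial

/-- Lemma `polyOnSupSet`: given `n` distinct evaluation points and `D + 1 ≤ n`,
the number of value tuples `y : Fin n → F` interpolated by some polynomial of
degree at most `D` is exactly `q ^ (D + 1)`. -/
theorem stmt_1 {F : Type*} [Field F] [Fintype F] (q : ℕ) (hq : Fintype.card F = q)
    (n : ℕ) (x : Fin n → F) (hx : Function.Injective x)
    (D : ℕ) (hD : D + 1 ≤ n) :
    Nat.card {y : Fin n → F //
      ∃ Q : F[X], Q.natDegree ≤ D ∧ ∀ i, Q.eval (x i) = y i} = q ^ (D + 1) := by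
  have hrange : Set.range (fun Q : degreeLT F (D + 1) => fun i => Q.1.eval (x i)) =
      {y | ∃ Q : F[X], Q.natDegree ≤ D ∧ ∀ i, Q.eval (x i) = y i} := by
    ext y
    simp only [Set.mem_range, Set.mem_ofPred_eq, Subtype.exists, mem_degreeLT_succ_iff, funext_iff,
      exists_prop]
  rw [← Set.coe_ofPred, ← hrange, Nat.card_range_of_injective
    (injective_eval_degreeLT hx (by simpa using hD)), natCard_degreeLT, Nat.card_eq_fintype_card, hq]
end

section
/- Let F be a finite field with exactly q elements. Let P, Q ∈ F[X] be nonzero polynomials with natDegree P = ℓ and natDegree Q = ℓ, and let g be the natDegree of gcd(P, Q). Let x : Fin n → F be injective, assume P.eval (x k) ≠ 0 for every k, and assume n ≤ 2ℓ − g + 1. Then for every tuple v : Fin n → F, the number of pairs (R₁, R₂) of polynomials with natDegree R₁ ≤ ℓ, natDegree R₂ ≤ ℓ and (R₁·P + R₂·Q).eval (x k) = v k for every k equals q^(2ℓ + 2 − n). In particular this count is the same for every v and for every choice of Q satisfying the hypotheses, so the n evaluations of R₁·P + R₂·Q at the points x reveal no information about Q. -/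
/-!
Let `D = gcd P Q`. The map `(R₁, R₂) ↦ ((R₁ * P + R₂ * Q)(x k))ₖ` is `F`-linear from a space
of dimension `2ℓ + 2` to `Fⁿ`, so once it is onto, every fibre is a coset of a kernel of
dimension `2ℓ + 2 - n`. It is onto: Lagrange interpolation gives `S` of degree `< n ≤ 2ℓ - g + 1`
with `(D * S)(x k) = u k` (as `D ∣ P`, `D` does not vanish at the nodes), and the multiple
`D * S` of the gcd has degree `≤ 2ℓ`, so Bézout's identity, with the first coefficient reduced
modulo `Q / D`, writes it as `R₁ * P + R₂ * Q` with both `Rᵢ` of degree `≤ ℓ`.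
-/

open Polynomial

open Module in
theorem LinearMap.natCard_fiber_of_surjective {K V W : Type*} [Field K] [AddCommGroup V]
    [Module K V] [Module.Finite K V] [AddCommGroup W] [Module K W] [Module.Finite K W]
    {f : V →ₗ[K] W} (hf : Function.Surjective f) (w : W) :
    Nat.card (f ⁻¹' {w}) = Nat.card K ^ (finrank K V - finrank K W) := by
  have hker : finrank K (ker f) = finrank K V - finrank K W := by
    have := f.finrank_range_add_finrank_ker
    rw [range_eq_top.2 hf, finrank_top] at this
    omega
  refine (Nat.card_congr (f.toAddMonoidHom.fiberEquivKerOfSurjective hf w)).trans ?_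
  rw [← hker, ← natCard_eq_pow_finrank, ← ker_toAddSubgroup]
  rfl

namespace Polynomial

variable {K : Type*} [Field K]

theorem finrank_degreeLT (n : ℕ) : Module.finrank K K[X]_n = n := by
  rw [(degreeLTEquiv K n).finrank_eq, Module.finrank_fin_fun]

theorem mem_degreeLT_succ_iff_s2 {n : ℕ} {p : K[X]} : p ∈ K[X]_(n + 1) ↔ p.natDegree ≤ n := by
  rw [degreeLT_succ_eq_degreeLE, mem_degreeLE, natDegree_le_iff_degree_le]

theorem exists_mul_add_mul_eq_of_gcd_dvd [DecidableEq K] {P Q M : K[X]} (hQ : Q ≠ 0)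
    (hM : EuclideanDomain.gcd P Q ∣ M) (hdeg : M.natDegree ≤ P.natDegree + Q.natDegree) :
    ∃ R₁ R₂ : K[X], R₁.natDegree ≤ Q.natDegree ∧ R₂.natDegree ≤ P.natDegree ∧
      R₁ * P + R₂ * Q = M := by
  obtain ⟨S, rfl⟩ := hM
  obtain ⟨P', hP'⟩ := EuclideanDomain.gcd_dvd_left P Q
  obtain ⟨Q', hQ'⟩ := EuclideanDomain.gcd_dvd_right P Q
  obtain ⟨A, B, hbezout⟩ : ∃ A B, P * A + Q * B = EuclideanDomain.gcd P Q :=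
    ⟨_, _, (EuclideanDomain.gcd_eq_gcd_ab P Q).symm⟩
  set D := EuclideanDomain.gcd P Q
  have hQ'0 : Q' ≠ 0 := by rintro rfl; exact hQ (by rw [hQ', mul_zero])
  -- Trading `T * Q'` in the first coefficient for `T * P'` in the second is harmless,
  -- as `Q' * P = D * P' * Q' = P' * Q`.
  set T := S * A / Q'
  set R₁ := S * A % Q'
  have hdiv : Q' * T + R₁ = S * A := EuclideanDomain.div_add_mod _ _
  have hR : R₁ * P + (S * B + T * P') * Q = D * S := by
    linear_combination P * hdiv + S * hbezout + T * P' * hQ' - T * Q' * hP'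
  have hR₁ : R₁.natDegree ≤ Q.natDegree := by
    rw [natDegree_le_iff_degree_le, ← degree_eq_natDegree hQ]
    have hQ'Q : Q'.degree ≤ Q.degree := degree_le_of_dvd ⟨D, by rw [hQ', mul_comm]⟩ hQ
    exact ((EuclideanDomain.mod_lt _ hQ'0).trans_le hQ'Q).le
  refine ⟨R₁, _, hR₁, ?_, hR⟩
  rcases eq_or_ne (S * B + T * P') 0 with h | h
  · simp [h]
  have : ((S * B + T * P') * Q).natDegree ≤ P.natDegree + Q.natDegree := by
    rw [eq_sub_of_add_eq' hR]
    exact (natDegree_sub_le _ _).trans (max_le hdeg (natDegree_mul_le.trans (by omega)))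
  rw [natDegree_mul h hQ] at this
  omega

theorem exists_mem_degreeLT_eval_mul_eq {n : ℕ} {x : Fin n → K} (hx : Function.Injective x)
    {D : K[X]} (hD : ∀ k, D.eval (x k) ≠ 0) (u : Fin n → K) :
    ∃ S ∈ K[X]_n, ∀ k, (D * S).eval (x k) = u k := by
  classical
  have hxs : Set.InjOn x (Finset.univ : Finset (Fin n)) := hx.injOn
  refine ⟨Lagrange.interpolate Finset.univ x (fun k => u k / D.eval (x k)), ?_, fun k => ?_⟩
  · simpa [mem_degreeLT] using Lagrange.degree_interpolate_lt _ hxs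
  · rw [eval_mul, Lagrange.eval_interpolate_at_node _ hxs (Finset.mem_univ k),
      mul_div_cancel₀ _ (hD k)]

variable {ι : Type*}

noncomputable def evalMulAdd (P Q : K[X]) (x : ι → K) (a b : ℕ) :
    K[X]_a × K[X]_b →ₗ[K] (ι → K) :=
  LinearMap.pi (fun k => leval (x k)) ∘ₗ
    ((LinearMap.mulRight K P ∘ₗ (K[X]_a).subtype).coprod
      (LinearMap.mulRight K Q ∘ₗ (K[X]_b).subtype))

@[simp]
theorem evalMulAdd_apply (P Q : K[X]) (x : ι → K) (a b : ℕ) (R : K[X]_a × K[X]_b) (k : ι) :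
    evalMulAdd P Q x a b R k = ((R.1 : K[X]) * P + R.2 * Q).eval (x k) :=
  rfl

theorem evalMulAdd_surjective [DecidableEq K] {n : ℕ} {P Q : K[X]} {x : Fin n → K}
    (hx : Function.Injective x) (hQ : Q ≠ 0)
    (hD : ∀ k, (EuclideanDomain.gcd P Q).eval (x k) ≠ 0)
    (hn : n + (EuclideanDomain.gcd P Q).natDegree ≤ P.natDegree + Q.natDegree + 1) :
    Function.Surjective (evalMulAdd P Q x (Q.natDegree + 1) (P.natDegree + 1)) := by
  intro u
  obtain ⟨S, hS, hSu⟩ := exists_mem_degreeLT_eval_mul_eq hx hD u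
  have hDQ : (EuclideanDomain.gcd P Q).natDegree ≤ Q.natDegree :=
    natDegree_le_of_dvd (EuclideanDomain.gcd_dvd_right P Q) hQ
  have hSdeg : S.natDegree ≤ P.natDegree + Q.natDegree - (EuclideanDomain.gcd P Q).natDegree :=
    mem_degreeLT_succ_iff_s2.1 (degreeLT_mono (by omega) hS)
  obtain ⟨R₁, R₂, hR₁, hR₂, hR⟩ := exists_mul_add_mul_eq_of_gcd_dvd hQ
    (dvd_mul_right (EuclideanDomain.gcd P Q) S) (natDegree_mul_le.trans (by omega))
  refine ⟨(⟨R₁, mem_degreeLT_succ_iff_s2.2 hR₁⟩, ⟨R₂, mem_degreeLT_succ_iff_s2.2 hR₂⟩), ?_⟩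
  ext k
  simp [hR, hSu]

theorem natCard_eval_mul_add_eq_natCard_fiber (P Q : K[X]) (x : ι → K) (a b : ℕ) (v : ι → K) :
    Nat.card {R : K[X] × K[X] //
        R.1.natDegree ≤ a ∧ R.2.natDegree ≤ b ∧ ∀ k, (R.1 * P + R.2 * Q).eval (x k) = v k}
      = Nat.card (evalMulAdd P Q x (a + 1) (b + 1) ⁻¹' {v}) :=
  Nat.card_congr
    { toFun R :=
        ⟨(⟨R.1.1, mem_degreeLT_succ_iff_s2.2 R.2.1⟩, ⟨R.1.2, mem_degreeLT_succ_iff_s2.2 R.2.2.1⟩),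
          by ext k; exact R.2.2.2 k⟩
      invFun R :=
        ⟨(R.1.1, R.1.2), mem_degreeLT_succ_iff_s2.1 R.1.1.2, mem_degreeLT_succ_iff_s2.1 R.1.2.2,
          congrFun (R.2 : evalMulAdd P Q x _ _ R.1 = v)⟩
      left_inv _ := rfl
      right_inv _ := rfl }

end Polynomial

theorem stmt_2_general {F : Type*} [Field F] [Fintype F] [DecidableEq F] (q : ℕ) (hq : Fintype.card F = q)
    (P Q : F[X]) (hQ : Q ≠ 0)
    (ℓ g n : ℕ) (hPd : P.natDegree = ℓ) (hQd : Q.natDegree = ℓ)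
    (hg : (EuclideanDomain.gcd P Q).natDegree = g)
    (x : Fin n → F) (hx : Function.Injective x)
    (hPx : ∀ k, P.eval (x k) ≠ 0)
    (hn : n ≤ 2 * ℓ - g + 1) :
    ∀ v : Fin n → F,
      Nat.card {R : F[X] × F[X] //
        R.1.natDegree ≤ ℓ ∧ R.2.natDegree ≤ ℓ ∧
        ∀ k, (R.1 * P + R.2 * Q).eval (x k) = v k}
        = q ^ (2 * ℓ + 2 - n) := by
  intro v
  have hD : ∀ k, (EuclideanDomain.gcd P Q).eval (x k) ≠ 0 := fun k h =>
    hPx k (eval_eq_zero_of_dvd_of_eval_eq_zero (EuclideanDomain.gcd_dvd_left P Q) h)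
  have hgℓ : g ≤ ℓ := hg ▸ hQd ▸ natDegree_le_of_dvd (EuclideanDomain.gcd_dvd_right P Q) hQ
  have hsurj := evalMulAdd_surjective hx hQ hD (by omega)
  rw [hPd, hQd] at hsurj
  rw [natCard_eval_mul_add_eq_natCard_fiber, LinearMap.natCard_fiber_of_surjective hsurj,
    Module.finrank_prod, finrank_degreeLT, Module.finrank_fin_fun, Nat.card_eq_fintype_card, hq]
  congr 1
  omega

/-- Combinatorial core of Proposition 1 (`indcpaGreaterThanRange`): if
`n ≤ 2ℓ - g + 1`, then for every value tuple `v`, the number of pairs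
`(R₁, R₂)` of polynomials of degree at most `ℓ` whose combination
`R₁ * P + R₂ * Q` evaluates to `v` at the `n` distinct points is exactly
`q ^ (2ℓ + 2 - n)`, independent of `v` and of `Q`. -/
theorem stmt_2 {F : Type*} [Field F] [Fintype F] [DecidableEq F] (q : ℕ) (hq : Fintype.card F = q)
    (P Q : F[X]) (hP : P ≠ 0) (hQ : Q ≠ 0)
    (ℓ g n : ℕ) (hPd : P.natDegree = ℓ) (hQd : Q.natDegree = ℓ)
    (hg : (EuclideanDomain.gcd P Q).natDegree = g)
    (x : Fin n → F) (hx : Function.Injective x)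
    (hPx : ∀ k, P.eval (x k) ≠ 0)
    (hn : n ≤ 2 * ℓ - g + 1) :
    ∀ v : Fin n → F,
      Nat.card {R : F[X] × F[X] //
        R.1.natDegree ≤ ℓ ∧ R.2.natDegree ≤ ℓ ∧
        ∀ k, (R.1 * P + R.2 * Q).eval (x k) = v k}
        = q ^ (2 * ℓ + 2 - n) :=
  stmt_2_general q hq P Q hQ ℓ g n hPd hQd hg x hx hPx hn
end

section
/- Let ℓ be a natural number, let β be a type, and let M : Fin ℓ → Bool → β be such that the map (m, v) ↦ M m v is injective (each M_m is injective and the ranges of the M_m are pairwise disjoint). For a vector a : Fin ℓ → Bool define the finite set S_a = { M m (a m) : m ∈ Fin ℓ }. Then for all a, b : Fin ℓ → Bool, the cardinality of the set difference S_a \ S_b equals hammingDist a b. -/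
open Finset Function

section

variable {ι γ β : Type*} {M : ι → γ → β}

theorem injective_apply_apply (hM : Injective (uncurry M)) (a : ι → γ) :
    Injective (fun i => M i (a i)) :=
  fun i j h => congrArg Prod.fst (@hM (i, a i) (j, a j) h)

variable [Fintype ι] [DecidableEq β]

theorem apply_mem_image_apply_iff (hM : Injective (uncurry M)) (b : ι → γ) {i : ι} {c : γ} :
    M i c ∈ univ.image (fun j => M j (b j)) ↔ b i = c := by
  constructor
  · intro h
    obtain ⟨j, -, hj⟩ := mem_image.mp h
    obtain ⟨rfl, hc⟩ := Prod.ext_iff.mp (@hM (j, b j) (i, c) hj)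
    exact hc
  · rintro rfl
    exact mem_image_of_mem _ (mem_univ i)

variable [DecidableEq γ]

theorem image_apply_sdiff_image_apply (hM : Injective (uncurry M)) (a b : ι → γ) :
    univ.image (fun i => M i (a i)) \ univ.image (fun i => M i (b i)) =
      ({i | a i ≠ b i} : Finset ι).image (fun i => M i (a i)) := by
  rw [sdiff_eq_filter, filter_image]
  simp only [apply_mem_image_apply_iff hM, eq_comm]

theorem card_image_apply_sdiff_image_apply (hM : Injective (uncurry M)) (a b : ι → γ) :
    #(univ.image (fun i => M i (a i)) \ univ.image (fun i => M i (b i))) = hammingDist a b := by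
  rw [image_apply_sdiff_image_apply hM, card_image_of_injective _ (injective_apply_apply hM a)]
  rfl

end

/-- Correctness of the `Map` step of `tHamQueryLite`: using jointly injective
mapping functions `M m : Bool → β`, the cardinality of the set difference
`S_a \ S_b` equals the Hamming distance of `a` and `b`. -/
theorem stmt_6 {β : Type*} [DecidableEq β] (ℓ : ℕ) (M : Fin ℓ → Bool → β)
    (hM : Function.Injective (fun p : Fin ℓ × Bool => M p.1 p.2))
    (a b : Fin ℓ → Bool) :
    ((Finset.univ.image (fun m => M m (a m))) \
        (Finset.univ.image (fun m => M m (b m)))).card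
      = hammingDist a b :=
  card_image_apply_sdiff_image_apply hM a b
end

section
/- For all natural numbers n and k with n > k ≥ 1, twice the number of surjective functions from Fin n onto Fin k is at most k! · C(n, k) · k^(n − k); equivalently, the Stirling number of the second kind satisfies S(n, k) ≤ (1/2)·C(n, k)·k^(n − k) for n > k ≥ 1. -/
/-!
A surjection `f : Option α → β` is determined by `b = f none` and its restriction to `α`, which
is either onto `β`, or onto `β ∖ {b}` when `none` is the only preimage of `b`. For finite sets
this gives `#Surj(n + 1, k + 1) = (k + 1) * (#Surj(n, k + 1) + #Surj(n, k))`, the recurrence of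
`k! * S(n, k)`. The bound `2 S(n, k) ≤ C(n, k) k^(n - k)` then follows by induction on `n` from
`S(m + 1, j + 1) = (j + 1) S(m, j + 1) + S(m, j)` and Pascal's rule; at `n = k + 1` it is an
equality.
-/

open Function

namespace Equiv

variable {α α' β β' : Type*}

def surjectionsCongr (eα : α ≃ α') (eβ : β ≃ β') :
    {f : α → β // Surjective f} ≃ {f : α' → β' // Surjective f} :=
  (eα.arrowCongr eβ).subtypeEquiv fun f =>
    ((EquivLike.comp_surjective _ eβ).trans (EquivLike.surjective_comp eα.symm f)).symm

end Equiv

section OptionElim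

variable {α β : Type*}

def optionElimSurjection :
    (β × {g : α → β // Surjective g}) ⊕ (Σ b : β, {g : α → {y // y ≠ b} // Surjective g}) →
      {f : Option α → β // Surjective f}
  | .inl (b, g) => ⟨fun x => x.elim b g, fun y => by
      obtain ⟨a, rfl⟩ := g.2 y
      exact ⟨some a, rfl⟩⟩
  | .inr ⟨b, g⟩ => ⟨fun x => x.elim b (fun a => g.1 a), fun y => by
      by_cases hy : y = b
      · exact ⟨none, hy.symm⟩
      · obtain ⟨a, ha⟩ := g.2 ⟨y, hy⟩
        exact ⟨some a, congrArg Subtype.val ha⟩⟩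

theorem optionElimSurjection_bijective : Bijective (optionElimSurjection (α := α) (β := β)) := by
  constructor
  · rintro (⟨b, g⟩ | ⟨b, g⟩) (⟨b', g'⟩ | ⟨b', g'⟩) h <;>
      have hnone := congrFun (congrArg Subtype.val h) none <;>
      have hsome := fun a => congrFun (congrArg Subtype.val h) (some a) <;>
      simp only [optionElimSurjection, Option.elim_none, Option.elim_some] at hnone hsome <;>
      subst hnone
    · exact congrArg _ (Prod.ext rfl (Subtype.ext (funext hsome)))
    · obtain ⟨a, ha⟩ := g.2 b
      exact ((g'.1 a).2 ((hsome a).symm.trans ha)).elim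
    · obtain ⟨a, ha⟩ := g'.2 b
      exact ((g.1 a).2 ((hsome a).trans ha)).elim
    · exact congrArg _ (Sigma.ext rfl (heq_of_eq (Subtype.ext (funext fun a =>
        Subtype.ext (hsome a)))))
  · rintro ⟨f, hf⟩
    by_cases hs : Surjective (f ∘ some)
    · exact ⟨.inl (f none, ⟨_, hs⟩), Subtype.ext (funext fun x => by cases x <;> rfl)⟩
    · have hne : ∀ a, f (some a) ≠ f none := fun a ha => hs fun y => by
        obtain ⟨x | x, rfl⟩ := hf y
        · exact ⟨a, ha⟩
        · exact ⟨x, rfl⟩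
      refine ⟨.inr ⟨f none, ⟨fun a => ⟨f (some a), hne a⟩, fun y => ?_⟩⟩,
        Subtype.ext (funext fun x => by cases x <;> rfl)⟩
      obtain ⟨x | x, hx⟩ := hf y
      · exact absurd hx.symm y.2
      · exact ⟨x, Subtype.ext hx⟩

end OptionElim

theorem card_surjective_fin_succ_succ (n k : ℕ) :
    Nat.card {f : Fin (n + 1) → Fin (k + 1) // Surjective f} =
      (k + 1) * (Nat.card {g : Fin n → Fin (k + 1) // Surjective g} +
        Nat.card {g : Fin n → Fin k // Surjective g}) := by
  have hsigma : (Σ b : Fin (k + 1), {g : Fin n → {y // y ≠ b} // Surjective g}) ≃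
      Fin (k + 1) × {g : Fin n → Fin k // Surjective g} :=
    Equiv.sigmaEquivProdOfEquiv fun b =>
      Equiv.surjectionsCongr (Equiv.refl _) (finSuccAboveEquiv b).symm
  rw [Nat.card_congr (Equiv.surjectionsCongr (finSuccEquiv n) (Equiv.refl _)),
    ← Nat.card_eq_of_bijective _ optionElimSurjection_bijective, Nat.card_sum,
    Nat.card_congr hsigma, Nat.card_prod, Nat.card_prod, Nat.card_fin, mul_add]

theorem card_surjective_fin_eq_factorial_mul_stirlingSecond (n k : ℕ) :
    Nat.card {f : Fin n → Fin k // Surjective f} = k.factorial * n.stirlingSecond k := by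
  induction n generalizing k with
  | zero =>
    cases k with
    | zero => exact Nat.card_eq_one_iff_unique.mpr ⟨inferInstance, ⟨⟨finZeroElim, finZeroElim⟩⟩⟩
    | succ k =>
      have : IsEmpty {f : Fin 0 → Fin (k + 1) // Surjective f} :=
        ⟨fun f => let ⟨a, _⟩ := f.2 0; a.elim0⟩
      simp
  | succ n ih =>
    cases k with
    | zero => simp
    | succ k =>
      rw [card_surjective_fin_succ_succ, ih, ih, Nat.stirlingSecond_succ_succ, Nat.factorial_succ]
      ring

theorem two_mul_stirlingSecond_le {n k : ℕ} (h : k < n) :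
    2 * n.stirlingSecond k ≤ n.choose k * k ^ (n - k) := by
  induction n generalizing k with
  | zero => omega
  | succ m ih =>
    cases k with
    | zero => simp
    | succ j =>
      have ih_j := ih (k := j) (by omega)
      rw [Nat.stirlingSecond_succ_succ, Nat.choose_succ_succ', Nat.succ_sub_succ]
      rcases (show j + 1 ≤ m by omega).eq_or_lt with rfl | hlt
      · simp only [Nat.stirlingSecond_self, Nat.choose_succ_self_right, Nat.choose_self,
          Nat.add_sub_cancel_left, pow_one] at ih_j ⊢
        nlinarith
      · have ih_succ := ih hlt
        have hpow : (j + 1) * (j + 1) ^ (m - (j + 1)) = (j + 1) ^ (m - j) := by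
          rw [← pow_succ']; congr 1; omega
        calc 2 * ((j + 1) * m.stirlingSecond (j + 1) + m.stirlingSecond j)
            = (j + 1) * (2 * m.stirlingSecond (j + 1)) + 2 * m.stirlingSecond j := by ring
          _ ≤ (j + 1) * (m.choose (j + 1) * (j + 1) ^ (m - (j + 1)))
              + m.choose j * j ^ (m - j) := by gcongr
          _ = m.choose (j + 1) * (j + 1) ^ (m - j) + m.choose j * j ^ (m - j) := by
            rw [← hpow]; ring
          _ ≤ m.choose (j + 1) * (j + 1) ^ (m - j) + m.choose j * (j + 1) ^ (m - j) := by
            gcongr; omega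
          _ = (m.choose j + m.choose (j + 1)) * (j + 1) ^ (m - j) := by ring

theorem stmt_10_general (n k : ℕ) (hn : k < n) :
    2 * Nat.card {f : Fin n → Fin k // Function.Surjective f}
      ≤ k.factorial * n.choose k * k ^ (n - k) := by
  rw [card_surjective_fin_eq_factorial_mul_stirlingSecond, mul_left_comm, mul_assoc]
  exact Nat.mul_le_mul_left _ (two_mul_stirlingSecond_le hn)

/-- Upper bound on Stirling numbers of the second kind, in the form
`2 · #surjections(n, k) ≤ k! · C(n, k) · k^(n−k)` for `n > k ≥ 1`. -/
theorem stmt_10 (n k : ℕ) (hk : 1 ≤ k) (hn : k < n) :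
    2 * Nat.card {f : Fin n → Fin k // Function.Surjective f}
      ≤ k.factorial * n.choose k * k ^ (n - k) :=
  stmt_10_general n k hn
end

section
/- Let lo < hi be natural numbers. Then every natural number x with lo ≤ x < hi belongs to exactly one maximal dyadic interval contained in [lo, hi); consequently the maximal dyadic intervals contained in [lo, hi) are pairwise disjoint and their union is exactly the set {x : lo ≤ x < hi}. -/
/-!
Two dyadic intervals containing a common point `x` are both blocks `{y | y / 2^j = x / 2^j}`
of the family indexed by the level `j`, which increases with `j`; so dyadic intervals through
`x` form a chain. Inside the bounded range `[lo, hi)` only finitely many levels fit, and the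
block of greatest admissible level is the unique maximal dyadic interval through `x`.
Distinct maximal intervals are therefore disjoint, and they cover the range.
-/

/-- A dyadic interval of naturals: `{x : m·2^j ≤ x < (m+1)·2^j}`. -/
def IsDyadic (I : Set ℕ) : Prop :=
  ∃ m j : ℕ, I = Set.Ico (m * 2 ^ j) ((m + 1) * 2 ^ j)

/-- A dyadic interval maximal inside `[lo, hi)`: it is contained in
`Ico lo hi` and no strictly larger dyadic interval is. -/
def IsMaxDyadic (lo hi : ℕ) (I : Set ℕ) : Prop :=
  IsDyadic I ∧ I ⊆ Set.Ico lo hi ∧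
    ∀ J : Set ℕ, IsDyadic J → I ⊂ J → ¬ J ⊆ Set.Ico lo hi

lemma Nat.mem_Ico_mul_iff_div_eq {k : ℕ} (hk : 0 < k) (m y : ℕ) :
    y ∈ Set.Ico (m * k) ((m + 1) * k) ↔ y / k = m := by
  rw [Nat.div_eq_iff hk, Set.mem_Ico, add_mul, one_mul]
  omega

def dyadicBlock (x j : ℕ) : Set ℕ := {y | y / 2 ^ j = x / 2 ^ j}

lemma mem_dyadicBlock_self (x j : ℕ) : x ∈ dyadicBlock x j := rfl

lemma dyadicBlock_eq_Ico (x j : ℕ) :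
    dyadicBlock x j = Set.Ico (x / 2 ^ j * 2 ^ j) ((x / 2 ^ j + 1) * 2 ^ j) := by
  ext y
  rw [Nat.mem_Ico_mul_iff_div_eq (Nat.two_pow_pos j)]
  rfl

lemma isDyadic_dyadicBlock (x j : ℕ) : IsDyadic (dyadicBlock x j) :=
  ⟨_, j, dyadicBlock_eq_Ico x j⟩

lemma IsDyadic.exists_eq_dyadicBlock {I : Set ℕ} (hI : IsDyadic I) {x : ℕ} (hx : x ∈ I) :
    ∃ j, I = dyadicBlock x j := by
  obtain ⟨m, j, rfl⟩ := hI
  have hm : x / 2 ^ j = m := (Nat.mem_Ico_mul_iff_div_eq (Nat.two_pow_pos j) m x).1 hx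
  exact ⟨j, by rw [dyadicBlock_eq_Ico, hm]⟩

lemma dyadicBlock_mono (x : ℕ) : Monotone (dyadicBlock x) := by
  intro j j' hjj' y (hy : y / 2 ^ j = x / 2 ^ j)
  obtain ⟨k, rfl⟩ := Nat.exists_eq_add_of_le hjj'
  change y / 2 ^ (j + k) = x / 2 ^ (j + k)
  rw [pow_add, ← Nat.div_div_eq_div_mul, ← Nat.div_div_eq_div_mul, hy]

lemma IsDyadic.subset_or_subset {I J : Set ℕ} (hI : IsDyadic I) (hJ : IsDyadic J) {x : ℕ}
    (hxI : x ∈ I) (hxJ : x ∈ J) : I ⊆ J ∨ J ⊆ I := by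
  obtain ⟨j, rfl⟩ := hI.exists_eq_dyadicBlock hxI
  obtain ⟨j', rfl⟩ := hJ.exists_eq_dyadicBlock hxJ
  exact (le_total j j').imp (fun h => dyadicBlock_mono x h) (fun h => dyadicBlock_mono x h)

lemma lt_of_dyadicBlock_subset_Ico {x j lo hi : ℕ} (h : dyadicBlock x j ⊆ Set.Ico lo hi) :
    j < hi := by
  rw [dyadicBlock_eq_Ico, Set.Ico_subset_Ico_iff (by simp)] at h
  have hpow : 2 ^ j ≤ hi := by
    calc 2 ^ j ≤ (x / 2 ^ j + 1) * 2 ^ j := Nat.le_mul_of_pos_left _ (Nat.succ_pos _)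
      _ ≤ hi := h.2
  exact (Nat.lt_two_pow_self).trans_le hpow

lemma IsMaxDyadic.eq_of_mem {lo hi x : ℕ} {I J : Set ℕ} (hI : IsMaxDyadic lo hi I)
    (hJ : IsMaxDyadic lo hi J) (hxI : x ∈ I) (hxJ : x ∈ J) : I = J := by
  by_contra hne
  rcases hI.1.subset_or_subset hJ.1 hxI hxJ with hIJ | hJI
  · exact hI.2.2 J hJ.1 (hIJ.ssubset_of_ne hne) hJ.2.1
  · exact hJ.2.2 I hI.1 (hJI.ssubset_of_ne (Ne.symm hne)) hI.2.1

lemma exists_isMaxDyadic_mem {lo hi x : ℕ} (hx : x ∈ Set.Ico lo hi) :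
    ∃ I, IsMaxDyadic lo hi I ∧ x ∈ I := by
  classical
  let Fits : ℕ → Prop := fun j => dyadicBlock x j ⊆ Set.Ico lo hi
  have fits_zero : Fits 0 := by
    intro y (hy : y / 2 ^ 0 = x / 2 ^ 0)
    rw [pow_zero, Nat.div_one, Nat.div_one] at hy
    exact hy ▸ hx
  let top := Nat.findGreatest Fits hi
  refine ⟨dyadicBlock x top, ⟨isDyadic_dyadicBlock x top,
    Nat.findGreatest_spec (Nat.zero_le hi) fits_zero, ?_⟩, mem_dyadicBlock_self x top⟩
  intro J hJ hlt hJfits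
  obtain ⟨j, rfl⟩ := hJ.exists_eq_dyadicBlock (hlt.1 (mem_dyadicBlock_self x top))
  have htop : top < j := lt_of_not_ge fun hj => hlt.2 (dyadicBlock_mono x hj)
  exact Nat.findGreatest_is_greatest htop (lt_of_dyadicBlock_subset_Ico hJfits).le hJfits

theorem stmt_13_general (lo hi : ℕ) :
    (∀ x, x ∈ Set.Ico lo hi → ∃! I : Set ℕ, IsMaxDyadic lo hi I ∧ x ∈ I) ∧
    ({I : Set ℕ | IsMaxDyadic lo hi I}.Pairwise Disjoint) ∧
    (⋃₀ {I : Set ℕ | IsMaxDyadic lo hi I} = Set.Ico lo hi) := by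
  refine ⟨fun x hx => ?_, fun I hI J hJ hne => ?_, ?_⟩
  · obtain ⟨I, hI, hxI⟩ := exists_isMaxDyadic_mem hx
    exact ⟨I, ⟨hI, hxI⟩, fun J ⟨hJ, hxJ⟩ => hJ.eq_of_mem hI hxJ hxI⟩
  · exact Set.disjoint_left.2 fun x hxI hxJ => hne (IsMaxDyadic.eq_of_mem hI hJ hxI hxJ)
  · refine Set.sUnion_subset (fun I hI => hI.2.1) |>.antisymm fun x hx => ?_
    obtain ⟨I, hI, hxI⟩ := exists_isMaxDyadic_mem hx
    exact ⟨I, hI, hxI⟩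

/-- Every `x ∈ [lo, hi)` belongs to exactly one maximal dyadic interval of
`[lo, hi)`; hence the maximal dyadic intervals are pairwise disjoint and
their union is exactly `[lo, hi)`. -/
theorem stmt_13 (lo hi : ℕ) (h : lo < hi) :
    (∀ x, x ∈ Set.Ico lo hi → ∃! I : Set ℕ, IsMaxDyadic lo hi I ∧ x ∈ I) ∧
    ({I : Set ℕ | IsMaxDyadic lo hi I}.Pairwise Disjoint) ∧
    (⋃₀ {I : Set ℕ | IsMaxDyadic lo hi I} = Set.Ico lo hi) :=
  stmt_13_general lo hi
end

section
/- Let k and d be natural numbers with d < 2^k. Then the number of maximal dyadic intervals contained in [2^k, 2^k + d) equals the number of maximal dyadic intervals contained in [0, d); an explicit bijection is given by translating each interval by 2^k. -/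
open Set

theorem isMaxDyadic_iff_maximal {lo hi : ℕ} {I : Set ℕ} :
    IsMaxDyadic lo hi I ↔ Maximal (fun J ↦ IsDyadic J ∧ J ⊆ Ico lo hi) I := by
  simp only [IsMaxDyadic, maximal_iff_forall_gt, not_and, and_assoc]
  exact Iff.rfl.and (Iff.rfl.and ⟨fun h J hss hJ ↦ h J hJ hss, fun h J hJ hss ↦ h hss hJ⟩)

theorem image_add_Ico_mul_two_pow (m n j : ℕ) :
    (· + n * 2 ^ j) '' Ico (m * 2 ^ j) ((m + 1) * 2 ^ j)
      = Ico ((m + n) * 2 ^ j) ((m + n + 1) * 2 ^ j) := by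
  rw [image_add_const_Ico]
  congr 1 <;> ring

theorem le_of_Ico_mul_two_pow_subset {m j a k : ℕ}
    (h : Ico (m * 2 ^ j) ((m + 1) * 2 ^ j) ⊆ Ico a (a + 2 ^ k)) : j ≤ k := by
  have hlt : m * 2 ^ j < (m + 1) * 2 ^ j := by gcongr; omega
  obtain ⟨ha, hb⟩ := (Ico_subset_Ico_iff hlt).1 h
  rw [← Nat.pow_le_pow_iff_right one_lt_two]
  nlinarith

theorem isDyadic_image_add_two_pow_iff {k : ℕ} {I : Set ℕ} (hI : I ⊆ Ico 0 (2 ^ k)) :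
    IsDyadic ((· + 2 ^ k) '' I) ↔ IsDyadic I := by
  have hsplit : ∀ {j}, j ≤ k → 2 ^ k = 2 ^ (k - j) * 2 ^ j := fun hj ↦ by
    rw [← pow_add, Nat.sub_add_cancel hj]
  constructor
  · rintro ⟨m, j, himage⟩
    have hsub : Ico (m * 2 ^ j) ((m + 1) * 2 ^ j) ⊆ Ico (2 ^ k) (2 ^ k + 2 ^ k) := by
      have := image_mono (f := (· + 2 ^ k)) hI
      rwa [image_add_const_Ico, zero_add, himage] at this
    have hjk := le_of_Ico_mul_two_pow_subset hsub
    have hm : 2 ^ (k - j) ≤ m := by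
      have := ((Ico_subset_Ico_iff (by gcongr; omega)).1 hsub).1
      rw [hsplit hjk] at this
      exact Nat.le_of_mul_le_mul_right this (by positivity)
    obtain ⟨m', rfl⟩ := Nat.exists_eq_add_of_le hm
    refine ⟨m', j, image_injective.2 (add_left_injective (2 ^ k)) ?_⟩
    rw [himage, hsplit hjk, image_add_Ico_mul_two_pow, add_comm m']
  · rintro ⟨m, j, rfl⟩
    have hjk := le_of_Ico_mul_two_pow_subset (a := 0) (by simpa only [zero_add] using hI)
    exact ⟨m + 2 ^ (k - j), j, by rw [hsplit hjk, image_add_Ico_mul_two_pow]⟩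

theorem isDyadic_image_add_and_subset_iff {k d : ℕ} (hd : d ≤ 2 ^ k) {I : Set ℕ} :
    (IsDyadic ((· + 2 ^ k) '' I) ∧ (· + 2 ^ k) '' I ⊆ Ico (2 ^ k) (2 ^ k + d))
      ↔ IsDyadic I ∧ I ⊆ Ico 0 d := by
  rw [show Ico (2 ^ k) (2 ^ k + d) = (· + 2 ^ k) '' Ico 0 d by
      rw [image_add_const_Ico, zero_add, add_comm],
    image_subset_image_iff (add_left_injective _)]
  exact and_congr_left fun h ↦ isDyadic_image_add_two_pow_iff (h.trans (Ico_subset_Ico_right hd))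

theorem image_add_preimage_of_subset_Ici {c : ℕ} {J : Set ℕ} (hJ : J ⊆ Ici c) :
    (· + c) '' ((· + c) ⁻¹' J) = J :=
  image_preimage_eq_of_subset fun x hx ↦ ⟨x - c, Nat.sub_add_cancel (hJ hx)⟩

def imageAddOrderEmbedding (c : ℕ) : Set ℕ ↪o Set ℕ :=
  OrderEmbedding.ofMapLEIff (image (· + c)) fun _ _ ↦ image_subset_image_iff (add_left_injective c)

theorem isMaxDyadic_iff_image_add {k d : ℕ} (hd : d ≤ 2 ^ k) (I : Set ℕ) :
    IsMaxDyadic 0 d I ↔ IsMaxDyadic (2 ^ k) (2 ^ k + d) ((· + 2 ^ k) '' I) := by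
  have hrange : {J | IsDyadic J ∧ J ⊆ Ico (2 ^ k) (2 ^ k + d)}
      ⊆ range (imageAddOrderEmbedding (2 ^ k)) := fun J hJ ↦
    ⟨_, image_add_preimage_of_subset_Ici (hJ.2.trans Ico_subset_Ici_self)⟩
  have := (imageAddOrderEmbedding (2 ^ k)).maximal_apply_mem_iff (x := I) hrange
  simp only [imageAddOrderEmbedding, OrderEmbedding.coe_ofMapLEIff, mem_ofPred_eq,
    isDyadic_image_add_and_subset_iff hd] at this
  rw [isMaxDyadic_iff_maximal, isMaxDyadic_iff_maximal, this]

theorem setOf_isMaxDyadic_add_eq_image {k d : ℕ} (hd : d ≤ 2 ^ k) :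
    {J | IsMaxDyadic (2 ^ k) (2 ^ k + d) J} = image (· + 2 ^ k) '' {I | IsMaxDyadic 0 d I} := by
  ext J
  refine ⟨fun hJ ↦ ?_, fun ⟨I, hI, hIJ⟩ ↦ hIJ ▸ (isMaxDyadic_iff_image_add hd I).1 hI⟩
  have hpre := image_add_preimage_of_subset_Ici (hJ.2.1.trans Ico_subset_Ici_self)
  refine ⟨_, ?_, hpre⟩
  rwa [mem_ofPred_eq, isMaxDyadic_iff_image_add hd, hpre]

/-- Lemma `trie_similarity`: for `d < 2^k`, the maximal dyadic intervals of
`[2^k, 2^k + d)` and of `[0, d)` are equinumerous, via translation by `2^k`. -/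
theorem stmt_15 (k d : ℕ) (h : d < 2 ^ k) :
    Nat.card {I : Set ℕ // IsMaxDyadic (2 ^ k) (2 ^ k + d) I}
      = Nat.card {I : Set ℕ // IsMaxDyadic 0 d I} ∧
    ∀ I : Set ℕ,
      IsMaxDyadic 0 d I ↔ IsMaxDyadic (2 ^ k) (2 ^ k + d) ((· + 2 ^ k) '' I) := by
  refine ⟨?_, isMaxDyadic_iff_image_add h.le⟩
  calc Nat.card {J : Set ℕ // IsMaxDyadic (2 ^ k) (2 ^ k + d) J}
      = Nat.card (image (· + 2 ^ k) '' {I | IsMaxDyadic 0 d I}) := by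
        rw [← setOf_isMaxDyadic_add_eq_image h.le]; rfl
    _ = Nat.card {I : Set ℕ // IsMaxDyadic 0 d I} :=
      Nat.card_image_of_injective (image_injective.2 (add_left_injective _)) _
end

section
/- For every natural number d ≥ 1, the number of maximal dyadic intervals contained in [0, d) equals 1 plus the number of maximal dyadic intervals contained in [0, d − 2^(⌊log₂ d⌋)), where ⌊log₂ d⌋ = Nat.log 2 d. -/
def dyadicIco (m j : ℕ) : Set ℕ := Set.Ico (m * 2 ^ j) ((m + 1) * 2 ^ j)

lemma mem_dyadicIco {x m j : ℕ} : x ∈ dyadicIco m j ↔ x / 2 ^ j = m := by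
  rw [dyadicIco, Set.mem_Ico, ← Nat.le_div_iff_mul_le (by positivity),
    ← Nat.div_lt_iff_lt_mul (by positivity)]
  omega

lemma dyadicIco_subset_dyadicIco_iff {m n j k : ℕ} :
    dyadicIco m j ⊆ dyadicIco n k ↔ j ≤ k ∧ m / 2 ^ (k - j) = n := by
  constructor
  · intro h
    have hlen : 2 ^ j ≤ 2 ^ k := by
      obtain ⟨h₁, h₂⟩ := (Set.Ico_subset_Ico_iff (by simp [add_mul])).1 h
      linarith [add_mul m 1 (2 ^ j), add_mul n 1 (2 ^ k)]
    have hjk : j ≤ k := (Nat.pow_le_pow_iff_right (by norm_num)).1 hlen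
    refine ⟨hjk, ?_⟩
    have hmem : m * 2 ^ j ∈ dyadicIco n k := h (mem_dyadicIco.2 (by simp))
    rwa [mem_dyadicIco, ← Nat.add_sub_cancel' hjk, pow_add, ← Nat.div_div_eq_div_mul,
      Nat.mul_div_cancel _ (by positivity)] at hmem
  · rintro ⟨hjk, rfl⟩ x hx
    rw [mem_dyadicIco] at hx ⊢
    rw [← hx, Nat.div_div_eq_div_mul, ← pow_add, Nat.add_sub_cancel' hjk]

lemma dyadicIco_ssubset_parent (m j : ℕ) : dyadicIco m j ⊂ dyadicIco (m / 2) (j + 1) :=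
  ssubset_of_subset_not_subset (dyadicIco_subset_dyadicIco_iff.2 (by simp))
    fun h => by simpa using (dyadicIco_subset_dyadicIco_iff.1 h).1

lemma dyadicIco_parent_subset_of_ssubset {m j : ℕ} {J : Set ℕ} (hJ : IsDyadic J)
    (h : dyadicIco m j ⊂ J) :
    dyadicIco (m / 2) (j + 1) ⊆ J := by
  obtain ⟨n, k, rfl⟩ := hJ
  change _ ⊂ dyadicIco n k at h
  change _ ⊆ dyadicIco n k
  obtain ⟨hjk, rfl⟩ := dyadicIco_subset_dyadicIco_iff.1 h.subset
  obtain rfl | hjk := hjk.eq_or_lt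
  · simp at h
  refine dyadicIco_subset_dyadicIco_iff.2 ⟨hjk, ?_⟩
  rw [Nat.div_div_eq_div_mul, ← pow_succ', Nat.sub_add_eq, Nat.sub_add_cancel (by omega)]

lemma isMaxDyadic_dyadicIco_iff {lo hi m j : ℕ} :
    IsMaxDyadic lo hi (dyadicIco m j) ↔
      dyadicIco m j ⊆ Set.Ico lo hi ∧ ¬ dyadicIco (m / 2) (j + 1) ⊆ Set.Ico lo hi :=
  ⟨fun ⟨_, hsub, hmax⟩ => ⟨hsub, hmax _ ⟨_, _, rfl⟩ (dyadicIco_ssubset_parent m j)⟩,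
    fun ⟨hsub, hpar⟩ => ⟨⟨m, j, rfl⟩, hsub, fun _ hJ hss hJsub =>
      hpar ((dyadicIco_parent_subset_of_ssubset hJ hss).trans hJsub)⟩⟩

lemma dyadicIco_subset_Ico_zero_iff {m j d : ℕ} :
    dyadicIco m j ⊆ Set.Ico 0 d ↔ m + 1 ≤ d / 2 ^ j := by
  rw [dyadicIco, Set.Ico_subset_Ico_iff (by simp [add_mul]), Nat.le_div_iff_mul_le (by positivity)]
  simp

lemma isMaxDyadic_zero_dyadicIco_iff {m j d : ℕ} :
    IsMaxDyadic 0 d (dyadicIco m j) ↔ d.testBit j ∧ m + 1 = d / 2 ^ j := by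
  rw [isMaxDyadic_dyadicIco_iff, dyadicIco_subset_Ico_zero_iff, dyadicIco_subset_Ico_zero_iff,
    pow_succ, ← Nat.div_div_eq_div_mul, Nat.testBit_eq_decide_div_mod_eq, decide_eq_true_iff]
  omega

lemma setOf_isMaxDyadic_zero (d : ℕ) :
    {I | IsMaxDyadic 0 d I} = (fun j => dyadicIco (d / 2 ^ j - 1) j) '' {j | d.testBit j} := by
  ext I
  constructor
  · intro hI
    obtain ⟨m, j, rfl⟩ := hI.1
    obtain ⟨hbit, hm⟩ := isMaxDyadic_zero_dyadicIco_iff.1 hI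
    exact ⟨j, hbit, by simp [← hm, dyadicIco]⟩
  · rintro ⟨j, hbit, rfl⟩
    refine isMaxDyadic_zero_dyadicIco_iff.2 ⟨hbit, ?_⟩
    have hq : 0 < d / 2 ^ j := Nat.div_pos (Nat.ge_two_pow_of_testBit hbit) (by positivity)
    omega

lemma level_eq_of_dyadicIco_eq {m n j k : ℕ} (h : dyadicIco m j = dyadicIco n k) : j = k :=
  le_antisymm (dyadicIco_subset_dyadicIco_iff.1 h.le).1 (dyadicIco_subset_dyadicIco_iff.1 h.ge).1

lemma finite_setOf_testBit (d : ℕ) : {j | d.testBit j}.Finite :=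
  (Set.finite_Iio d).subset fun _ hj => Nat.lt_two_pow_self.trans_le (Nat.ge_two_pow_of_testBit hj)

lemma card_isMaxDyadic_zero (d : ℕ) :
    Nat.card {I // IsMaxDyadic 0 d I} = {j | d.testBit j}.ncard := by
  rw [← Set.ncard_image_of_injective _ fun _ _ h => level_eq_of_dyadicIco_eq h,
    ← setOf_isMaxDyadic_zero]
  exact Nat.card_coe_set_eq _

lemma sub_two_pow_log_lt (d : ℕ) : d - 2 ^ Nat.log 2 d < 2 ^ Nat.log 2 d := by
  have := Nat.lt_pow_succ_log_self one_lt_two d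
  rw [pow_succ] at this
  omega

lemma setOf_testBit_eq_insert {d : ℕ} (hd : d ≠ 0) :
    {j | d.testBit j} = insert (Nat.log 2 d) {j | (d - 2 ^ Nat.log 2 d).testBit j} := by
  set L := Nat.log 2 d
  set r := d - 2 ^ L
  have hdr : d = 2 ^ L + r := (Nat.add_sub_cancel' (Nat.pow_log_le_self 2 hd)).symm
  have hr : r < 2 ^ L := sub_two_pow_log_lt d
  have hdL : d < 2 ^ (L + 1) := Nat.lt_pow_succ_log_self one_lt_two d
  ext j
  simp only [Set.mem_ofPred_eq, Set.mem_insert_iff]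
  rw [hdr]
  rcases lt_trichotomy j L with hj | rfl | hj
  · simp [Nat.testBit_two_pow_add_gt hj, hj.ne]
  · simp [Nat.testBit_two_pow_add_eq, Nat.testBit_lt_two_pow hr]
  · have : 2 ^ (L + 1) ≤ 2 ^ j := Nat.pow_le_pow_right two_pos hj
    simp [Nat.testBit_lt_two_pow (by omega : 2 ^ L + r < 2 ^ j),
      Nat.testBit_lt_two_pow (by omega : r < 2 ^ j), hj.ne']

/-- Recursion from Lemma `number_enclosing_trees_more_than`:
`N(T_{0,d}) = 1 + N(T_{0, d − 2^{⌊log₂ d⌋}})` for `d ≥ 1`. -/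
theorem stmt_16 (d : ℕ) (hd : 1 ≤ d) :
    Nat.card {I : Set ℕ // IsMaxDyadic 0 d I}
      = 1 + Nat.card {I : Set ℕ // IsMaxDyadic 0 (d - 2 ^ Nat.log 2 d) I} := by
  rw [card_isMaxDyadic_zero, card_isMaxDyadic_zero, setOf_testBit_eq_insert (by omega),
    Set.ncard_insert_of_notMem _ (finite_setOf_testBit _), add_comm]
  simp [Nat.testBit_lt_two_pow (sub_two_pow_log_lt d)]
end

section
/- For every natural number d ≥ 1, the number of maximal dyadic intervals contained in [0, d) is at most ⌊log₂ d⌋ + 1, where ⌊log₂ d⌋ = Nat.log 2 d. -/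
open Set

lemma Ico_ssubset_Ico_parent (m j : ℕ) :
    Ico (m * 2 ^ j) ((m + 1) * 2 ^ j) ⊂ Ico (m / 2 * 2 ^ (j + 1)) ((m / 2 + 1) * 2 ^ (j + 1)) := by
  have hp : 0 < 2 ^ j := by positivity
  rw [pow_succ]
  refine ssubset_of_subset_not_subset ?_ fun h => ?_
  · exact (Ico_subset_Ico_iff (by nlinarith)).2 ⟨by nlinarith [Nat.div_mul_le_self m 2],
      by nlinarith [Nat.lt_div_mul_add (a := m) two_pos]⟩
  · have := (Ico_subset_Ico_iff (by nlinarith)).1 h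
    nlinarith

lemma IsMaxDyadic.div_pow_eq_succ {d m j : ℕ}
    (h : IsMaxDyadic 0 d (Ico (m * 2 ^ j) ((m + 1) * 2 ^ j))) : d / 2 ^ j = m + 1 := by
  obtain ⟨-, hsub, hmax⟩ := h
  have hp : 0 < 2 ^ j := by positivity
  have hle : (m + 1) * 2 ^ j ≤ d := ((Ico_subset_Ico_iff (by nlinarith)).1 hsub).2
  have hparent := hmax _ ⟨m / 2, j + 1, rfl⟩ (Ico_ssubset_Ico_parent m j)
  rw [Ico_subset_Ico_iff (by gcongr; exact Nat.lt_succ_self _), not_and_or, not_le, not_le]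
    at hparent
  refine Nat.div_eq_of_lt_le hle ?_
  rcases hparent with h0 | hlt
  · omega
  · calc d < (m / 2 + 1) * 2 ^ (j + 1) := hlt
      _ = (2 * (m / 2) + 2) * 2 ^ j := by ring
      _ ≤ (m + 2) * 2 ^ j := by gcongr; omega

lemma IsMaxDyadic.eq_Ico_div {d : ℕ} {I : Set ℕ} (h : IsMaxDyadic 0 d I) :
    ∃ j ≤ Nat.log 2 d, I = Ico ((d / 2 ^ j - 1) * 2 ^ j) (d / 2 ^ j * 2 ^ j) := by
  obtain ⟨m, j, rfl⟩ := h.1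
  have hdiv := h.div_pow_eq_succ
  have hpow : 2 ^ j ≤ d := (Nat.div_pos_iff.1 (hdiv ▸ m.succ_pos)).2
  exact ⟨j, Nat.le_log_of_pow_le one_lt_two hpow, by rw [hdiv, Nat.add_sub_cancel]⟩

theorem stmt_17_general (d : ℕ) :
    Nat.card {I : Set ℕ // IsMaxDyadic 0 d I} ≤ Nat.log 2 d + 1 := by
  let candidates := (Finset.range (Nat.log 2 d + 1)).image
    fun j => Ico ((d / 2 ^ j - 1) * 2 ^ j) (d / 2 ^ j * 2 ^ j)
  have hsub : {I | IsMaxDyadic 0 d I} ⊆ candidates := fun I hI => by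
    obtain ⟨j, hj, rfl⟩ := IsMaxDyadic.eq_Ico_div hI
    exact Finset.mem_coe.2 (Finset.mem_image_of_mem _ (Finset.mem_range_succ_iff.2 hj))
  calc Nat.card {I : Set ℕ // IsMaxDyadic 0 d I}
      = {I | IsMaxDyadic 0 d I}.ncard := Nat.card_coe_set_eq _
    _ ≤ (candidates : Set (Set ℕ)).ncard := ncard_le_ncard hsub (Finset.finite_toSet _)
    _ ≤ Nat.log 2 d + 1 := by
      rw [ncard_coe_finset]
      exact Finset.card_image_le.trans (Finset.card_range _).le

/-- Lemma `number_enclosing_trees_more_than` (upper-bound form): the number of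
maximal dyadic intervals of `[0, d)` is at most `⌊log₂ d⌋ + 1`. -/
theorem stmt_17 (d : ℕ) (hd : 1 ≤ d) :
    Nat.card {I : Set ℕ // IsMaxDyadic 0 d I} ≤ Nat.log 2 d + 1 :=
  stmt_17_general d
end

section
/- For all natural numbers a and m with 1 ≤ a < 2^m, the number of maximal dyadic intervals contained in [a, 2^m) is at most m. -/
/-!
A maximal dyadic interval `[p·2^j, (p+1)·2^j)` of `[a, 2^m)` with `a ≥ 1` has `j < m`, so its
parent `[⌊p/2⌋·2^(j+1), (⌊p/2⌋+1)·2^(j+1))` still ends by `2^m`; maximality then forces the parent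
to start below `a`, whence `p·2^j < a + 2^j`. Thus `p = ⌈a/2^j⌉` and the interval is determined by
its exponent `j < m`.
-/

open Set

/-- The dyadic interval of length `2^j` with the least left endpoint `≥ a`
(`(a + 2^j - 1) / 2^j = ⌈a / 2^j⌉`). -/
def firstDyadicFrom (a j : ℕ) : Set ℕ :=
  Ico ((a + 2 ^ j - 1) / 2 ^ j * 2 ^ j) (((a + 2 ^ j - 1) / 2 ^ j + 1) * 2 ^ j)

lemma Ico_mul_pow_two_ssubset_parent (p j : ℕ) :
    Ico (p * 2 ^ j) ((p + 1) * 2 ^ j) ⊂ Ico (p / 2 * 2 ^ (j + 1)) ((p / 2 + 1) * 2 ^ (j + 1)) := by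
  have hpos : 0 < 2 ^ j := by positivity
  have hp : p / 2 * 2 ≤ p ∧ p + 1 ≤ (p / 2 + 1) * 2 := by omega
  rw [pow_succ]
  refine ⟨Ico_subset_Ico (by nlinarith) (by nlinarith), fun h => ?_⟩
  rw [Ico_subset_Ico_iff (by nlinarith)] at h
  nlinarith

lemma Nat.succ_mul_le_of_dvd_of_mul_lt {q d n : ℕ} (hd : d ∣ n) (h : q * d < n) :
    (q + 1) * d ≤ n := by
  obtain ⟨k, rfl⟩ := hd
  have hqk : q < k := Nat.lt_of_mul_lt_mul_right (by rwa [mul_comm d k] at h)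
  rw [mul_comm d k]
  exact Nat.mul_le_mul_right d hqk

lemma Nat.add_sub_one_div_eq_of_le_mul {a d p : ℕ} (h₁ : a ≤ p * d) (h₂ : p * d < a + d) :
    (a + d - 1) / d = p :=
  Nat.div_eq_of_lt_le (by omega) (by rw [add_mul, one_mul]; omega)

lemma IsMaxDyadic.lt_and_le_and_lt {a m p j : ℕ} (ha : 1 ≤ a)
    (h : IsMaxDyadic a (2 ^ m) (Ico (p * 2 ^ j) ((p + 1) * 2 ^ j))) :
    j < m ∧ a ≤ p * 2 ^ j ∧ p * 2 ^ j < a + 2 ^ j := by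
  obtain ⟨-, hsub, hmax⟩ := h
  have hpos : 0 < 2 ^ j := by positivity
  obtain ⟨hlo, hhi⟩ := (Ico_subset_Ico_iff (by nlinarith)).mp hsub
  have hjm : j < m := by
    have hp : 1 ≤ p := Nat.pos_of_ne_zero (by rintro rfl; omega)
    have : 2 ^ (j + 1) ≤ 2 ^ m := by rw [pow_succ]; nlinarith
    exact (Nat.pow_le_pow_iff_right (by norm_num)).mp this
  refine ⟨hjm, hlo, ?_⟩
  have hp : p / 2 * 2 ≤ p ∧ p ≤ p / 2 * 2 + 1 := by omega
  have hright : (p / 2 + 1) * 2 ^ (j + 1) ≤ 2 ^ m :=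
    Nat.succ_mul_le_of_dvd_of_mul_lt (pow_dvd_pow 2 hjm) (by rw [pow_succ]; nlinarith)
  have hleft : p / 2 * 2 ^ (j + 1) < a := by
    by_contra! hle
    exact hmax _ ⟨p / 2, j + 1, rfl⟩ (Ico_mul_pow_two_ssubset_parent p j)
      (Ico_subset_Ico hle hright)
  rw [pow_succ] at hleft
  nlinarith

lemma IsMaxDyadic.exists_eq_firstDyadicFrom {a m : ℕ} {I : Set ℕ} (ha : 1 ≤ a)
    (hI : IsMaxDyadic a (2 ^ m) I) : ∃ j < m, firstDyadicFrom a j = I := by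
  obtain ⟨p, j, rfl⟩ := hI.1
  obtain ⟨hjm, hlo, hhi⟩ := hI.lt_and_le_and_lt ha
  refine ⟨j, hjm, ?_⟩
  rw [firstDyadicFrom, Nat.add_sub_one_div_eq_of_le_mul hlo hhi]

theorem stmt_18_general (a m : ℕ) (ha : 1 ≤ a) :
    Nat.card {I : Set ℕ // IsMaxDyadic a (2 ^ m) I} ≤ m := by
  have hsub : {I | IsMaxDyadic a (2 ^ m) I} ⊆ firstDyadicFrom a '' ↑(Finset.range m) :=
    fun I hI => by simpa using hI.exists_eq_firstDyadicFrom ha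
  calc Nat.card {I : Set ℕ // IsMaxDyadic a (2 ^ m) I}
      = {I | IsMaxDyadic a (2 ^ m) I}.ncard := rfl
    _ ≤ (firstDyadicFrom a '' ↑(Finset.range m)).ncard :=
      ncard_le_ncard hsub ((Finset.range m).finite_toSet.image _)
    _ ≤ (↑(Finset.range m) : Set ℕ).ncard := ncard_image_le (Finset.range m).finite_toSet
    _ = m := by rw [ncard_coe_finset, Finset.card_range]

/-- Lemma `number_enclosing_trees_less_than`: for `1 ≤ a < 2^m`, the number of
maximal dyadic intervals of `[a, 2^m)` is at most `m`. -/
theorem stmt_18 (a m : ℕ) (ha : 1 ≤ a) (ham : a < 2 ^ m) :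
    Nat.card {I : Set ℕ // IsMaxDyadic a (2 ^ m) I} ≤ m :=
  stmt_18_general a m ha
end

section
/- For all natural numbers a and d with d ≥ 1 and a ≥ d, the number of maximal dyadic intervals contained in the integer interval (a − d, a + d), i.e. in Ico (a − d + 1) (a + d), is at most 4·(⌊log₂ d⌋ + 1), where ⌊log₂ d⌋ = Nat.log 2 d; in particular, this number is O(log d). -/
lemma mul_two_pow_lt_succ_mul_two_pow (m j : ℕ) : m * 2 ^ j < (m + 1) * 2 ^ j :=
  Nat.mul_lt_mul_of_pos_right (Nat.lt_succ_self m) (Nat.two_pow_pos j)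

lemma dyadicIco_subset_Ico_iff {m j lo hi : ℕ} :
    dyadicIco m j ⊆ Set.Ico lo hi ↔ lo ≤ m * 2 ^ j ∧ (m + 1) * 2 ^ j ≤ hi :=
  Set.Ico_subset_Ico_iff (mul_two_pow_lt_succ_mul_two_pow m j)

lemma dyadicIco_parent_subset (m j : ℕ) :
    dyadicIco (m / 2) (j + 1) ⊆ Set.Ico ((m - 1) * 2 ^ j) ((m + 2) * 2 ^ j) := by
  unfold dyadicIco
  rw [pow_succ, mul_comm (2 ^ j) 2, ← mul_assoc, ← mul_assoc]
  exact Set.Ico_subset_Ico (Nat.mul_le_mul_right _ (by omega : m - 1 ≤ m / 2 * 2))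
    (Nat.mul_le_mul_right _ (by omega : (m / 2 + 1) * 2 ≤ m + 2))

lemma Nat.eq_ceilDiv_of_sub_one_mul_lt {a b c : ℕ} (hb : 0 < b) (h₁ : (c - 1) * b < a)
    (h₂ : a ≤ c * b) : c = a ⌈/⌉ b := by
  refine le_antisymm ?_ ((ceilDiv_le_iff_le_smul hb).2 (by rwa [smul_eq_mul, mul_comm]))
  by_contra! h
  have := (ceilDiv_le_iff_le_smul hb).1 (Nat.le_sub_one_of_lt h)
  rw [smul_eq_mul, mul_comm] at this
  omega

lemma le_log_sub_of_dyadicIco_subset {m j lo hi : ℕ} (h : dyadicIco m j ⊆ Set.Ico lo hi) :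
    j ≤ Nat.log 2 (hi - lo) := by
  obtain ⟨hlo, hhi⟩ := dyadicIco_subset_Ico_iff.1 h
  rw [add_one_mul] at hhi
  exact Nat.le_log_of_pow_le one_lt_two (by omega)

lemma IsMaxDyadic.sub_one_mul_lt_or_lt {lo hi m j : ℕ} (h : IsMaxDyadic lo hi (dyadicIco m j)) :
    (m - 1) * 2 ^ j < lo ∨ hi < (m + 2) * 2 ^ j := by
  have hparent := h.2.2 _ ⟨_, _, rfl⟩ (dyadicIco_ssubset_parent m j)
  by_contra! hin
  exact hparent ((dyadicIco_parent_subset m j).trans (Set.Ico_subset_Ico hin.1 hin.2))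

theorem IsMaxDyadic.exists_eq_dyadicIco {lo hi : ℕ} {I : Set ℕ} (hI : IsMaxDyadic lo hi I) :
    ∃ j ≤ Nat.log 2 (hi - lo),
      I = dyadicIco (lo ⌈/⌉ 2 ^ j) j ∨ I = dyadicIco (hi / 2 ^ j - 1) j := by
  obtain ⟨m, j, rfl⟩ := hI.1
  obtain ⟨hlo, hhi⟩ := dyadicIco_subset_Ico_iff.1 hI.2.1
  refine ⟨j, le_log_sub_of_dyadicIco_subset hI.2.1, ?_⟩
  rcases IsMaxDyadic.sub_one_mul_lt_or_lt (m := m) hI with hleft | hright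
  · rw [← Nat.eq_ceilDiv_of_sub_one_mul_lt (Nat.two_pow_pos j) hleft hlo]
    exact Or.inl rfl
  · rw [Nat.div_eq_of_lt_le hhi hright, Nat.add_sub_cancel]
    exact Or.inr rfl

theorem card_isMaxDyadic_le (lo hi : ℕ) :
    Nat.card {I : Set ℕ // IsMaxDyadic lo hi I} ≤ 2 * (Nat.log 2 (hi - lo) + 1) := by
  classical
  set C : Finset (Set ℕ) := (Finset.range (Nat.log 2 (hi - lo) + 1)).biUnion
    fun j => {dyadicIco (lo ⌈/⌉ 2 ^ j) j, dyadicIco (hi / 2 ^ j - 1) j}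
  have hsub : {I | IsMaxDyadic lo hi I} ⊆ C := fun I hI => by
    obtain ⟨j, hj, hI⟩ := IsMaxDyadic.exists_eq_dyadicIco hI
    simpa [C] using ⟨j, hj, hI⟩
  calc Nat.card {I : Set ℕ // IsMaxDyadic lo hi I}
      = {I | IsMaxDyadic lo hi I}.ncard := Nat.card_coe_set_eq _
    _ ≤ C.card := (Set.ncard_le_ncard hsub C.finite_toSet).trans_eq (Set.ncard_coe_finset C)
    _ ≤ ∑ _j ∈ Finset.range (Nat.log 2 (hi - lo) + 1), 2 :=
      Finset.card_biUnion_le.trans (Finset.sum_le_sum fun _ _ => Finset.card_le_two)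
    _ = 2 * (Nat.log 2 (hi - lo) + 1) := by simp [mul_comm]

theorem stmt_19_general (a d : ℕ) :
    Nat.card {I : Set ℕ // IsMaxDyadic (a - d + 1) (a + d) I}
      ≤ 4 * (Nat.log 2 d + 1) := by
  have hlog : Nat.log 2 (a + d - (a - d + 1)) ≤ Nat.log 2 d + 1 := by
    have := Nat.log_mono_right (b := 2) (show (a + d - (a - d + 1)) / 2 ≤ d by omega)
    rw [Nat.log_div_base] at this
    omega
  calc _ ≤ 2 * (Nat.log 2 (a + d - (a - d + 1)) + 1) := card_isMaxDyadic_le _ _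
    _ ≤ 4 * (Nat.log 2 d + 1) := by omega

/-- Main combinatorial bound for integer DA-PSI: the number of maximal dyadic
intervals of `(a − d, a + d)`, i.e. of `Ico (a − d + 1) (a + d)`, is at most
`4 (⌊log₂ d⌋ + 1) = O(log d)`. -/
theorem stmt_19 (a d : ℕ) (hd : 1 ≤ d) (had : d ≤ a) :
    Nat.card {I : Set ℕ // IsMaxDyadic (a - d + 1) (a + d) I}
      ≤ 4 * (Nat.log 2 d + 1) :=
  stmt_19_general a d
end
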